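/- For every integer d ≥ 2, the map π_c : SC_d(2,0;o) → S^{d-1} sending ((x,r),(y,s)) to (x − y)/‖x − y‖ is a well-defined continuous map and a homotopy equivalence; in particular the configuration space SC_d(2,0;o) of two nonoverlapping balls contained in the closed upper unit semiball of ℝ^d is homotopy equivalent to the sphere S^{d-1}. -/

import Mathlib

noncomputable section

/-- The configuration space `SC_d(2,0;o)` of two nonoverlapping balls in the closed
upper unit semiball of `ℝ^d`. -/
def SC20o (d : ℕ) (hd : 2 ≤ d) :
    Set ((EuclideanSpace ℝ (Fin d) × ℝ) × (EuclideanSpace ℝ (Fin d) × ℝ)) :=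
  {c | 0 < c.1.2 ∧ 0 < c.2.2 ∧
       c.1.1 ⟨d - 1, by omega⟩ ≥ c.1.2 ∧ c.2.1 ⟨d - 1, by omega⟩ ≥ c.2.2 ∧
       ‖c.1.1‖ + c.1.2 ≤ 1 ∧ ‖c.2.1‖ + c.2.2 ≤ 1 ∧
       ‖c.1.1 - c.2.1‖ ≥ c.1.2 + c.2.2}

/-- The unit sphere `S^{d-1} = {z ∈ ℝ^d : ‖z‖ = 1}`. -/
def unitSphere (d : ℕ) : Set (EuclideanSpace ℝ (Fin d)) := {z | ‖z‖ = 1}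

/-- The raw formula of the projection `π_c`, sending `((x,r),(y,s))` to `(x−y)/‖x−y‖`. -/
def rawPi (d : ℕ) :
    (EuclideanSpace ℝ (Fin d) × ℝ) × (EuclideanSpace ℝ (Fin d) × ℝ) →
      EuclideanSpace ℝ (Fin d) :=
  fun c => ‖c.1.1 - c.2.1‖⁻¹ • (c.1.1 - c.2.1)

/-!
The direction map `π_c` has a section `σ`, sending a unit vector `z` to two balls of radius `1/8`
centred at `e_d/2 ± z/8`. The straight-line homotopy from the identity
to `σ ∘ π_c` stays inside `SC_d(2,0;o)`: the set of single balls in the semiball is convex, and the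
two centre differences along the homotopy point in the same direction, so their lengths add up and
the nonoverlap inequality is preserved. Hence `π_c` is a homotopy equivalence with inverse `σ`.
-/

namespace SwissCheese

section Nonoverlapping

variable {E : Type*} [NormedAddCommGroup E]

def Nonoverlapping (c : (E × ℝ) × (E × ℝ)) : Prop :=
  c.1.2 + c.2.2 ≤ ‖c.1.1 - c.2.1‖

lemma Nonoverlapping.norm_sub_pos {c : (E × ℝ) × (E × ℝ)} (hc : Nonoverlapping c)
    (hr : 0 < c.1.2) (hs : 0 < c.2.2) : 0 < ‖c.1.1 - c.2.1‖ :=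
  lt_of_lt_of_le (add_pos hr hs) hc

variable [NormedSpace ℝ E]

lemma Nonoverlapping.smul_add_smul {c c' : (E × ℝ) × (E × ℝ)} (hc : Nonoverlapping c)
    (hc' : Nonoverlapping c') (hray : SameRay ℝ (c.1.1 - c.2.1) (c'.1.1 - c'.2.1))
    {a b : ℝ} (ha : 0 ≤ a) (hb : 0 ≤ b) : Nonoverlapping (a • c + b • c') := by
  have hsub : (a • c + b • c').1.1 - (a • c + b • c').2.1 =
      a • (c.1.1 - c.2.1) + b • (c'.1.1 - c'.2.1) := by
    simp only [Prod.fst_add, Prod.snd_add, Prod.smul_fst, Prod.smul_snd]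
    module
  unfold Nonoverlapping at *
  rw [hsub, ((hray.nonneg_smul_left ha).nonneg_smul_right hb).norm_add,
    norm_smul_of_nonneg ha, norm_smul_of_nonneg hb]
  simp only [Prod.fst_add, Prod.snd_add, Prod.smul_fst, Prod.smul_snd, smul_eq_mul]
  nlinarith [mul_le_mul_of_nonneg_left hc ha, mul_le_mul_of_nonneg_left hc' hb]

end Nonoverlapping

variable {d : ℕ} (hd : 2 ≤ d)

def semiballBalls : Set (EuclideanSpace ℝ (Fin d) × ℝ) :=
  {b | 0 < b.2 ∧ b.2 ≤ b.1 ⟨d - 1, by omega⟩ ∧ ‖b.1‖ + b.2 ≤ 1}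

lemma mem_SC20o_iff {c : (EuclideanSpace ℝ (Fin d) × ℝ) × (EuclideanSpace ℝ (Fin d) × ℝ)} :
    c ∈ SC20o d hd ↔
      c.1 ∈ semiballBalls hd ∧ c.2 ∈ semiballBalls hd ∧ Nonoverlapping c := by
  simp only [SC20o, semiballBalls, Nonoverlapping, Set.mem_ofPred_eq, ge_iff_le]
  tauto

lemma convex_semiballBalls : Convex ℝ (semiballBalls hd) := by
  rintro ⟨x, r⟩ ⟨hr, hxd, hx⟩ ⟨y, s⟩ ⟨hs, hyd, hy⟩ a b ha hb hab
  refine ⟨?_, ?_, ?_⟩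
  · exact convex_Ioi (0 : ℝ) hr hs ha hb hab
  · simp only [Prod.smul_mk, Prod.mk_add_mk, smul_eq_mul, PiLp.add_apply, PiLp.smul_apply]
    nlinarith [mul_le_mul_of_nonneg_left hxd ha, mul_le_mul_of_nonneg_left hyd hb]
  · simp only [Prod.smul_mk, Prod.mk_add_mk, smul_eq_mul]
    calc ‖a • x + b • y‖ + (a * r + b * s) ≤ a * (‖x‖ + r) + b * (‖y‖ + s) := by
          have := norm_add_le (a • x) (b • y)
          rw [norm_smul_of_nonneg ha, norm_smul_of_nonneg hb] at this
          linarith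
      _ ≤ 1 := by nlinarith

def halfNorthPole : EuclideanSpace ℝ (Fin d) :=
  EuclideanSpace.single ⟨d - 1, by omega⟩ (1 / 2 : ℝ)

lemma norm_halfNorthPole : ‖halfNorthPole hd‖ = 1 / 2 := by
  rw [halfNorthPole, PiLp.norm_single]; norm_num

lemma mk_mem_semiballBalls {x : EuclideanSpace ℝ (Fin d)} {r : ℝ} (hr : 0 < r)
    (hx : ‖x - halfNorthPole hd‖ + r ≤ 1 / 2) : (x, r) ∈ semiballBalls hd := by
  have hlast : |(x - halfNorthPole hd) ⟨d - 1, by omega⟩| ≤ ‖x - halfNorthPole hd‖ := by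
    simpa only [Real.norm_eq_abs] using PiLp.norm_apply_le (x - halfNorthPole hd) ⟨d - 1, by omega⟩
  have hxd : x ⟨d - 1, by omega⟩ = (x - halfNorthPole hd) ⟨d - 1, by omega⟩ + 1 / 2 := by
    simp [halfNorthPole]
  have hnorm := norm_le_norm_sub_add x (halfNorthPole hd)
  rw [norm_halfNorthPole] at hnorm
  exact ⟨hr, by linarith [neg_abs_le ((x - halfNorthPole hd) ⟨d - 1, by omega⟩)], by linarith⟩

def pairSection (z : EuclideanSpace ℝ (Fin d)) :
    (EuclideanSpace ℝ (Fin d) × ℝ) × (EuclideanSpace ℝ (Fin d) × ℝ) :=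
  ((halfNorthPole hd + (1 / 8 : ℝ) • z, 1 / 8), (halfNorthPole hd - (1 / 8 : ℝ) • z, 1 / 8))

lemma pairSection_sub (z : EuclideanSpace ℝ (Fin d)) :
    (pairSection hd z).1.1 - (pairSection hd z).2.1 = (1 / 4 : ℝ) • z := by
  simp only [pairSection]
  module

lemma pairSection_mem {z : EuclideanSpace ℝ (Fin d)} (hz : ‖z‖ = 1) :
    pairSection hd z ∈ SC20o d hd := by
  have hz8 : ‖(1 / 8 : ℝ) • z‖ = 1 / 8 := by rw [norm_smul, hz]; norm_num
  refine (mem_SC20o_iff hd).2 ⟨mk_mem_semiballBalls hd (by norm_num) ?_,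
    mk_mem_semiballBalls hd (by norm_num) ?_, ?_⟩
  · rw [add_sub_cancel_left, hz8]; norm_num
  · rw [sub_sub_cancel_left, norm_neg, hz8]; norm_num
  · rw [Nonoverlapping, pairSection_sub, norm_smul, hz]; norm_num [pairSection]

lemma rawPi_pairSection {z : EuclideanSpace ℝ (Fin d)} (hz : ‖z‖ = 1) :
    rawPi d (pairSection hd z) = z := by
  rw [rawPi, pairSection_sub, norm_smul, hz, smul_smul]
  norm_num

lemma continuous_pairSection : Continuous (pairSection hd) := by
  unfold pairSection
  fun_prop

lemma norm_sub_pos_of_mem {c : (EuclideanSpace ℝ (Fin d) × ℝ) × (EuclideanSpace ℝ (Fin d) × ℝ)}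
    (hc : c ∈ SC20o d hd) : 0 < ‖c.1.1 - c.2.1‖ :=
  Nonoverlapping.norm_sub_pos ((mem_SC20o_iff hd).1 hc).2.2 hc.1 hc.2.1

lemma norm_rawPi {c : (EuclideanSpace ℝ (Fin d) × ℝ) × (EuclideanSpace ℝ (Fin d) × ℝ)}
    (hc : c ∈ SC20o d hd) : ‖rawPi d c‖ = 1 := by
  rw [rawPi, norm_smul, norm_inv, norm_norm, inv_mul_cancel₀ (norm_sub_pos_of_mem hd hc).ne']

lemma continuous_rawPi : Continuous fun c : SC20o d hd => rawPi d c.1 := by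
  have hsub : Continuous fun c : SC20o d hd => c.1.1.1 - c.1.2.1 := by fun_prop
  exact (hsub.norm.inv₀ fun c => (norm_sub_pos_of_mem hd c.2).ne').smul hsub

lemma straightLine_mem {c : (EuclideanSpace ℝ (Fin d) × ℝ) × (EuclideanSpace ℝ (Fin d) × ℝ)}
    (hc : c ∈ SC20o d hd) {t : ℝ} (ht₀ : 0 ≤ t) (ht₁ : t ≤ 1) :
    (1 - t) • c + t • pairSection hd (rawPi d c) ∈ SC20o d hd := by
  have hσ := pairSection_mem hd (norm_rawPi hd hc)
  have hray : SameRay ℝ (c.1.1 - c.2.1) (rawPi d c) :=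
    SameRay.sameRay_nonneg_smul_right _ (inv_nonneg.2 (norm_nonneg _))
  rw [mem_SC20o_iff] at hc hσ ⊢
  refine ⟨convex_semiballBalls hd hc.1 hσ.1 (by linarith) ht₀ (sub_add_cancel 1 t),
    convex_semiballBalls hd hc.2.1 hσ.2.1 (by linarith) ht₀ (sub_add_cancel 1 t),
    hc.2.2.smul_add_smul hσ.2.2 ?_ (by linarith) ht₀⟩
  rw [pairSection_sub]
  exact hray.nonneg_smul_right (by norm_num)

def directionMap : C(SC20o d hd, unitSphere d) where
  toFun c := ⟨rawPi d c.1, norm_rawPi hd c.2⟩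
  continuous_toFun := (continuous_rawPi hd).subtype_mk _

def pairSectionMap : C(unitSphere d, SC20o d hd) where
  toFun z := ⟨pairSection hd z.1, pairSection_mem hd z.2⟩
  continuous_toFun := ((continuous_pairSection hd).comp continuous_subtype_val).subtype_mk _

def straightLineHomotopy :
    (ContinuousMap.id (SC20o d hd)).Homotopy ((pairSectionMap hd).comp (directionMap hd)) where
  toFun p := ⟨(1 - (p.1 : ℝ)) • p.2.1 + (p.1 : ℝ) • pairSection hd (rawPi d p.2.1),
    straightLine_mem hd p.2.2 p.1.2.1 p.1.2.2⟩
  continuous_toFun := by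
    have := (continuous_pairSection hd).comp ((continuous_rawPi hd).comp
      (continuous_snd (X := unitInterval)))
    exact Continuous.subtype_mk (by fun_prop) _
  map_zero_left c := by ext1; simp
  map_one_left c := by ext1; simp [pairSectionMap, directionMap]

lemma directionMap_comp_pairSectionMap :
    (directionMap hd).comp (pairSectionMap hd) = ContinuousMap.id (unitSphere d) :=
  ContinuousMap.ext fun z => Subtype.ext (rawPi_pairSection hd z.2)

def homotopyEquivSphere : ContinuousMap.HomotopyEquiv (SC20o d hd) (unitSphere d) where
  toFun := directionMap hd
  invFun := pairSectionMap hd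
  left_inv := ⟨(straightLineHomotopy hd).symm⟩
  right_inv := by rw [directionMap_comp_pairSectionMap]

end SwissCheese

/-- For every integer `d ≥ 2`, the map
`π_c : SC_d(2,0;o) → S^{d-1}`, `((x,r),(y,s)) ↦ (x−y)/‖x−y‖`, is well defined and
continuous, and it is a homotopy equivalence; in particular `SC_d(2,0;o)` is homotopy
equivalent to `S^{d-1}`. -/
theorem swissCheese_two_balls_open_homotopy_equiv_sphere (d : ℕ) (hd : 2 ≤ d) :
    (∀ c ∈ SC20o d hd, rawPi d c ∈ unitSphere d) ∧
    Continuous (fun c : SC20o d hd => rawPi d c.1) ∧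
    (∃ h : ContinuousMap.HomotopyEquiv (SC20o d hd) (unitSphere d),
        ∀ c : SC20o d hd, (h.toFun c : EuclideanSpace ℝ (Fin d)) = rawPi d c.1) :=
  ⟨fun _ hc => SwissCheese.norm_rawPi hd hc, SwissCheese.continuous_rawPi hd,
    ⟨SwissCheese.homotopyEquivSphere hd, fun _ => rfl⟩⟩
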